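/- For all real x > 0, the Gamma function satisfies √(2π) x^(x−1/2) e^(−x) < Γ(x) < √(2π) x^(x−1/2) e^(−x) e^(1/(12x)). -/

import Mathlib

/-!
With `g x = (x + 1/2) log (1 + 1/x) - 1` (`binetDiff`), Binet's function is
`μ x = ∑ n, g (x + n)` (`binet`), so that `μ x = g x + μ (x + 1)`. Expanding the logarithm in
powers of `1 / (2x + 1)` writes `g` as a series of positive convex terms dominated by a geometric
series, whence `0 < g x < 1/(12x) - 1/(12(x+1))`; the bound telescopes to `0 < μ x < 1/(12x)`,
and `μ` is convex. Thus `L x = (x - 1/2) log x - x + log(2π)/2 + μ x` is convex and satisfies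
`L (x + 1) = L x + log x`; Stirling's formula for `n!` gives `L 1 = 0`, so `Γ = exp ∘ L` by the
Bohr–Mollerup theorem.
-/

open Real Set Filter Topology

theorem convexOn_tsum {ι E : Type*} [AddCommMonoid E] [Module ℝ E] {s : Set E}
    {f : ι → E → ℝ} (hs : Convex ℝ s) (hf : ∀ i, ConvexOn ℝ s (f i))
    (hsum : ∀ x ∈ s, Summable fun i => f i x) : ConvexOn ℝ s fun x => ∑' i, f i x := by
  refine ⟨hs, fun x hx y hy a b ha hb hab => ?_⟩
  simp only [smul_eq_mul, ← tsum_mul_left]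
  rw [← ((hsum x hx).mul_left a).tsum_add ((hsum y hy).mul_left b)]
  exact (hsum _ (hs hx hy ha hb hab)).tsum_le_tsum (fun i => (hf i).2 hx hy ha hb hab)
    (((hsum x hx).mul_left a).add ((hsum y hy).mul_left b))

theorem convexOn_inv_pow_two_mul_add_one (n : ℕ) :
    ConvexOn ℝ (Ioi 0) fun y : ℝ => ((2 * y + 1) ^ n)⁻¹ := by
  let g : ℝ →ᵃ[ℝ] ℝ := (2 : ℝ) • AffineMap.id ℝ ℝ + AffineMap.const ℝ ℝ 1
  have hg : Ioi 0 ⊆ g ⁻¹' Ioi 0 := fun y (hy : 0 < y) => show 0 < 2 * y + 1 by positivity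
  refine (((convexOn_zpow (-n : ℤ)).comp_affineMap g).subset hg (convex_Ioi 0)).congr
    fun y _ => ?_
  simp [g, zpow_neg]

noncomputable def binetDiff (y : ℝ) : ℝ := (y + 1 / 2) * log (1 + y⁻¹) - 1

theorem hasSum_binetDiff {y : ℝ} (hy : 0 < y) :
    HasSum (fun k : ℕ => ((2 * k + 3) * (2 * y + 1) ^ (2 * k + 2))⁻¹) (binetDiff y) := by
  have hy₁ : 0 < 2 * y + 1 := by positivity
  let f (k : ℕ) : ℝ := ((2 * k + 1) * (2 * y + 1) ^ (2 * k))⁻¹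
  have hlog : HasSum f (binetDiff y + 1) := by
    have h := (hasSum_log_one_add_inv hy).mul_left (y + 1 / 2)
    rw [show (y + 1 / 2) * log (1 + y⁻¹) = binetDiff y + 1 by simp [binetDiff]] at h
    refine h.congr_fun fun k => ?_
    simp only [f]
    rw [div_pow, one_pow, pow_succ]
    field_simp
  refine ((hasSum_nat_add_iff (f := f) 1).2 (by simpa [f] using hlog)).congr_fun fun k => ?_
  simp only [f]
  push_cast
  ring_nf

theorem binetDiff_pos {y : ℝ} (hy : 0 < y) : 0 < binetDiff y := by
  rw [← (hasSum_binetDiff hy).tsum_eq]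
  exact (hasSum_binetDiff hy).summable.tsum_pos (fun _ => by positivity) 0 (by positivity)

theorem binetDiff_lt {y : ℝ} (hy : 0 < y) : binetDiff y < 1 / (12 * y) - 1 / (12 * (y + 1)) := by
  have hq : ((2 * y + 1) ^ 2)⁻¹ < 1 := inv_lt_one_of_one_lt₀ (by nlinarith)
  have hgeo : HasSum (fun k : ℕ => (3 * (2 * y + 1) ^ (2 * k + 2))⁻¹)
      (1 / (12 * y) - 1 / (12 * (y + 1))) := by
    have h := (hasSum_geometric_of_lt_one (by positivity) hq).mul_left (3 * (2 * y + 1) ^ 2)⁻¹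
    have h1q : 1 - ((2 * y + 1) ^ 2)⁻¹ = 4 * y * (y + 1) / (2 * y + 1) ^ 2 := by
      field_simp
      ring
    rw [h1q, show (3 * (2 * y + 1) ^ 2)⁻¹ * (4 * y * (y + 1) / (2 * y + 1) ^ 2)⁻¹
      = 1 / (12 * y) - 1 / (12 * (y + 1)) by field_simp; ring] at h
    refine h.congr_fun fun k => ?_
    rw [inv_pow, ← pow_mul]
    field_simp
    ring
  refine hasSum_lt (fun k => ?_) (i := 1) ?_ (hasSum_binetDiff hy) hgeo
  · dsimp only
    gcongr
    linarith [k.cast_nonneg (α := ℝ)]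
  · gcongr
    norm_num

noncomputable def binet (x : ℝ) : ℝ := ∑' n : ℕ, binetDiff (x + n)

theorem sum_range_binetDiff_le {x : ℝ} (hx : 0 < x) (n : ℕ) :
    ∑ i ∈ Finset.range n, binetDiff (x + i) ≤ 1 / (12 * x) := by
  let u (i : ℕ) : ℝ := 1 / (12 * (x + i))
  calc ∑ i ∈ Finset.range n, binetDiff (x + i)
      ≤ ∑ i ∈ Finset.range n, (u i - u (i + 1)) := by
        refine Finset.sum_le_sum fun i _ => ?_
        simpa [u, add_assoc] using (binetDiff_lt (y := x + i) (by positivity)).le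
    _ = u 0 - u n := Finset.sum_range_sub' u n
    _ ≤ 1 / (12 * x) := by simpa [u] using sub_le_self (u 0) (by positivity : 0 ≤ u n)

theorem summable_binetDiff_add_nat {x : ℝ} (hx : 0 < x) :
    Summable fun n : ℕ => binetDiff (x + n) :=
  summable_of_sum_range_le (fun _ => (binetDiff_pos (by positivity)).le)
    (sum_range_binetDiff_le hx)

theorem binet_le {x : ℝ} (hx : 0 < x) : binet x ≤ 1 / (12 * x) :=
  (summable_binetDiff_add_nat hx).tsum_le_of_sum_range_le (sum_range_binetDiff_le hx)

theorem binet_eq_binetDiff_add_binet_add_one {x : ℝ} (hx : 0 < x) :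
    binet x = binetDiff x + binet (x + 1) := by
  rw [binet, (summable_binetDiff_add_nat hx).tsum_eq_zero_add, binet]
  simp only [Nat.cast_zero, add_zero, Nat.cast_succ, add_assoc, add_comm (1 : ℝ)]

theorem binet_pos {x : ℝ} (hx : 0 < x) : 0 < binet x :=
  (summable_binetDiff_add_nat hx).tsum_pos (fun _ => (binetDiff_pos (by positivity)).le) 0
    (binetDiff_pos (by simpa using hx))

theorem binet_lt {x : ℝ} (hx : 0 < x) : binet x < 1 / (12 * x) := by
  rw [binet_eq_binetDiff_add_binet_add_one hx]
  linarith [binetDiff_lt hx, binet_le (x := x + 1) (by positivity)]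

theorem binetDiff_natCast_add_one (m : ℕ) :
    binetDiff (m + 1) =
      log (Stirling.stirlingSeq (m + 1)) - log (Stirling.stirlingSeq (m + 2)) := by
  refine (hasSum_binetDiff m.cast_add_one_pos).unique
    ((Stirling.log_stirlingSeq_sdiff_hasSum m).congr_fun fun k => ?_)
  simp only [one_div, inv_pow, ← pow_mul, mul_inv]
  push_cast
  ring_nf

theorem binet_one : binet 1 = 1 - log (2 * π) / 2 := by
  have hsum : ∀ n : ℕ, ∑ i ∈ Finset.range n, binetDiff (1 + i)
      = log (Stirling.stirlingSeq 1) - log (Stirling.stirlingSeq (n + 1)) := fun n => by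
    rw [← Finset.sum_range_sub' (fun i => log (Stirling.stirlingSeq (i + 1)))]
    exact Finset.sum_congr rfl fun i _ => by rw [add_comm, binetDiff_natCast_add_one]
  have hlim : Tendsto (fun n : ℕ => ∑ i ∈ Finset.range n, binetDiff (1 + i)) atTop
      (𝓝 (log (Stirling.stirlingSeq 1) - log √π)) := by
    simp only [hsum]
    exact ((continuousAt_log (by positivity)).tendsto.comp
      (Stirling.tendsto_stirlingSeq_sqrt_pi.comp (tendsto_add_atTop_nat 1))).const_sub _
  rw [binet, tendsto_nhds_unique (summable_binetDiff_add_nat one_pos).hasSum.tendsto_sum_nat hlim,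
    Stirling.stirlingSeq_one, log_div (exp_ne_zero 1) (by positivity), log_exp,
    log_sqrt (by positivity), log_sqrt (by positivity), log_mul (by norm_num) (by positivity)]
  ring

theorem convexOn_binetDiff : ConvexOn ℝ (Ioi 0) binetDiff := by
  refine (convexOn_tsum (convex_Ioi 0) (fun k => ?_) fun y hy => (hasSum_binetDiff hy).summable)
    |>.congr fun y hy => (hasSum_binetDiff hy).tsum_eq
  refine ((convexOn_inv_pow_two_mul_add_one (2 * k + 2)).smul
    (by positivity : (0 : ℝ) ≤ (2 * (k : ℝ) + 3)⁻¹)).congr fun y _ => ?_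
  simp [mul_comm]

theorem convexOn_binet : ConvexOn ℝ (Ioi 0) binet := by
  refine convexOn_tsum (convex_Ioi 0) (fun n => ?_) fun x hx => summable_binetDiff_add_nat hx
  refine ((convexOn_binetDiff.translate_right (n : ℝ)).subset
    (fun x (hx : 0 < x) => show 0 < (n : ℝ) + x by positivity) (convex_Ioi 0)).congr
    fun x _ => by simp [add_comm]

noncomputable def stirlingLogGamma (x : ℝ) : ℝ :=
  (x - 1 / 2) * log x - x + log (2 * π) / 2 + binet x

theorem convexOn_stirlingLogGamma : ConvexOn ℝ (Ioi 0) stirlingLogGamma := by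
  have hlog : ConvexOn ℝ (Ioi 0) fun x : ℝ => -log x := strictConcaveOn_log_Ioi.concaveOn.neg
  have hmain : ConvexOn ℝ (Ioi 0) fun x : ℝ => x * log x :=
    convexOn_mul_log.subset Ioi_subset_Ici_self (convex_Ioi 0)
  refine (((hmain.add (hlog.smul (by norm_num : (0 : ℝ) ≤ 1 / 2))).sub
    (concaveOn_id (convex_Ioi 0))).add convexOn_binet |>.add_const (log (2 * π) / 2)).congr
    fun x _ => ?_
  simp only [stirlingLogGamma, Pi.add_apply, Pi.sub_apply, smul_eq_mul, id]
  ring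

theorem stirlingLogGamma_add_one {y : ℝ} (hy : 0 < y) :
    stirlingLogGamma (y + 1) = stirlingLogGamma y + log y := by
  have hlog : log (1 + y⁻¹) = log (y + 1) - log y := by
    rw [← log_div (by positivity) hy.ne']
    congr 1
    field_simp
  rw [stirlingLogGamma, stirlingLogGamma, binet_eq_binetDiff_add_binet_add_one hy, binetDiff, hlog]
  ring

theorem stirlingLogGamma_one : stirlingLogGamma 1 = 0 := by
  rw [stirlingLogGamma, binet_one, log_one]
  ring

theorem Gamma_eq_exp_stirlingLogGamma {x : ℝ} (hx : 0 < x) :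
    Gamma x = exp (stirlingLogGamma x) := by
  refine (eq_Gamma_of_log_convex (f := exp ∘ stirlingLogGamma) ?_ (fun hy => ?_)
    (fun _ => exp_pos _) (by simp [stirlingLogGamma_one]) hx).symm
  · simpa [Function.comp_def] using convexOn_stirlingLogGamma
  · simp [stirlingLogGamma_add_one hy, exp_add, exp_log hy, mul_comm]

theorem Gamma_eq_mul_exp_binet {x : ℝ} (hx : 0 < x) :
    Gamma x = √(2 * π) * x ^ (x - 1 / 2) * exp (-x) * exp (binet x) := by
  rw [Gamma_eq_exp_stirlingLogGamma hx, stirlingLogGamma, rpow_def_of_pos hx, sqrt_eq_rpow,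
    rpow_def_of_pos (by positivity), ← exp_add, ← exp_add, ← exp_add]
  ring_nf

theorem gamma_stirling_strict_bounds (x : ℝ) (hx : 0 < x) :
    Real.sqrt (2 * Real.pi) * x ^ (x - 1/2) * Real.exp (-x) < Real.Gamma x ∧
    Real.Gamma x <
      Real.sqrt (2 * Real.pi) * x ^ (x - 1/2) * Real.exp (-x) * Real.exp (1 / (12 * x)) := by
  have hstirling : 0 < √(2 * π) * x ^ (x - 1 / 2) * exp (-x) := by positivity
  rw [Gamma_eq_mul_exp_binet hx]
  exact ⟨lt_mul_of_one_lt_right hstirling (one_lt_exp_iff.2 (binet_pos hx)),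
    mul_lt_mul_of_pos_left (exp_lt_exp.2 (binet_lt hx)) hstirling⟩
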